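/- arXiv:2302.13480 — 4 statements merged into one kernel-verified Lean document; each statement's English description precedes it below -/
import Mathlib

section
/- Let K be an algebraically closed field of characteristic p containing F_q. Let P = ∑_{γ=0}^{r} a_γ τ^γ + ∑_{β=1}^{n} ∑_{γ=0}^{κ_β} b_{βγ} τ^γ T^β ∈ K[T]{τ} with a_0 ≠ 0 and a_r ≠ 0, and all κ_β < r. Then for every x_0 ∈ K with ∑_γ a_γ x_0^{q^γ} = 0, and for every i ≥ 1, the equation determining x_i from x_0,…,x_{i−1} (namely ∑_γ a_γ x_i^{q^γ} + (terms in earlier x's) = 0) has exactly q^r solutions x_i in K; hence the set of solutions X = ∑ x_i T^i to P·X = 0 is a free F_q[[T]]-module of rank r. -/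
/-- The coefficientwise `q`-power Frobenius on `K[[T]]`. -/
noncomputable def sigma {K : Type*} [CommSemiring K] (q : ℕ) (X : PowerSeries K) :
    PowerSeries K :=
  PowerSeries.mk fun i => (PowerSeries.coeff i X) ^ q

/-- Action on `K[[T]]` of the element
`P = ∑_{γ=0}^{r} a_γ τ^γ + ∑_{β=1}^{nn} ∑_{γ=0}^{r-1} b_{βγ} τ^γ T^β`
of the Anderson ring `K[T]{τ}`. -/
noncomputable def actP {K : Type*} [CommSemiring K] (q r nn : ℕ)
    (a : ℕ → K) (b : ℕ → ℕ → K) (X : PowerSeries K) : PowerSeries K :=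
  (∑ γ ∈ Finset.range (r + 1), PowerSeries.C (a γ) * (sigma q)^[γ] X) +
  ∑ β ∈ Finset.Icc 1 nn, ∑ γ ∈ Finset.range r,
    PowerSeries.C (b β γ) * PowerSeries.X ^ β * (sigma q)^[γ] X

/-!
Write `L y = ∑ a_γ y^(q^γ)` for the head of `P`. Since `a_0 ≠ 0`, the polynomial `L + c` is
separable of degree `q^r`, so it has exactly `q^r` roots: this is the first claim, and it makes
`L` surjective with kernel `W` an `𝔽_q`-space of dimension `r`. The constant coefficient of `P·X`
is `L(x_0)`, and `P` commutes with multiplication by σ-fixed series, in particular by `T`. Hence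
`P` is surjective on `K[[T]]`, every element `w_j` of an `𝔽_q`-basis of `W` is the constant
coefficient of a solution `B_j`, and a solution `X` is written as `∑ A_j B_j` by `T`-adic
successive approximation: subtract the `𝔽_q`-combination of the `B_j` that matches the constant
coefficient of `X` (which lies in `W`), divide by `T`, and repeat. The same peeling, with the
linear independence of the `w_j`, gives uniqueness.
-/

namespace PowerSeries

variable {R : Type*} [CommRing R]

theorem eq_zero_of_forall_eq_X_mul_succ {D : ℕ → R⟦X⟧} (h : ∀ m, D m = X * D (m + 1))
    (m : ℕ) : D m = 0 := by
  have hdvd : ∀ k m, X ^ k ∣ D m := by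
    intro k
    induction k with
    | zero => simp
    | succ k ih =>
      intro m
      rw [h m, pow_succ']
      exact mul_dvd_mul_left X (ih (m + 1))
  ext i
  exact X_pow_dvd_iff.mp (hdvd (i + 1) m) i (Nat.lt_succ_self i)

theorem eq_X_mul_shift_of_constantCoeff_eq_zero {φ : R⟦X⟧} (h : constantCoeff φ = 0) :
    φ = X * mk fun i => coeff (i + 1) φ := by
  conv_lhs => rw [eq_X_mul_shift_add_const φ, h, map_zero, add_zero]

/-- `T`-adic successive approximation. The errors `D k` of the successive approximations satisfy
`D k = X * D (k + 1)`, which forces them to vanish. -/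
theorem exists_eq_of_forall_eq_add_X_mul {ι : Type*} (Φ : (ι → R⟦X⟧) → R⟦X⟧)
    (hadd : ∀ A B, Φ (A + B) = Φ A + Φ B) (hX : ∀ A, Φ (fun i => X * A i) = X * Φ A)
    (S : Set R⟦X⟧) (C : Set (ι → R))
    (hS : ∀ E ∈ S, ∃ c ∈ C, ∃ E' ∈ S, E = Φ (fun i => PowerSeries.C (c i)) + X * E')
    {E : R⟦X⟧} (hE : E ∈ S) :
    ∃ A : ι → R⟦X⟧, (∀ m, (fun i => coeff m (A i)) ∈ C) ∧ Φ A = E := by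
  choose! c hc next hnext hsplit using hS
  have hmem : ∀ k, ∀ E ∈ S, next^[k] E ∈ S := fun k =>
    Nat.rec (fun _ h => h) (fun k ih E hE => ih _ (hnext E hE)) k
  let build : R⟦X⟧ → ι → R⟦X⟧ := fun E i => mk fun k => c (next^[k] E) i
  have hbuild : ∀ E, build E = fun i => PowerSeries.C (c E i) + X * build (next E) i := by
    intro E; funext i
    rw [eq_X_mul_shift_add_const (build E i), add_comm]
    simp [build]
  refine ⟨build E, fun m => by simpa [build] using hc _ (hmem m E hE), ?_⟩
  have hdiff : ∀ E ∈ S, E - Φ (build E) = X * (next E - Φ (build (next E))) := by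
    intro E hE
    have hΦ : Φ (build E) = Φ (fun i => PowerSeries.C (c E i)) + X * Φ (build (next E)) := by
      rw [hbuild E, ← hX, ← hadd]; rfl
    rw [hΦ]
    nth_rw 1 [hsplit E hE]
    ring
  have := eq_zero_of_forall_eq_X_mul_succ (D := fun k => next^[k] E - Φ (build (next^[k] E)))
    (fun k => by simpa only [Function.iterate_succ_apply'] using hdiff _ (hmem k E hE)) 0
  exact (sub_eq_zero.mp this).symm

end PowerSeries

section HeadPolynomial

open Polynomial

variable {K : Type*} [Field K] {q : ℕ}

theorem separable_sum_C_mul_X_pow_pow_add_C (hqK : (q : K) = 0) (r : ℕ) {a : ℕ → K}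
    (ha0 : a 0 ≠ 0) (c : K) :
    (∑ γ ∈ Finset.range (r + 1), C (a γ) * X ^ q ^ γ + C c).Separable := by
  have hder : derivative (∑ γ ∈ Finset.range (r + 1), C (a γ) * X ^ q ^ γ + C c) = C (a 0) := by
    rw [derivative_add, derivative_C, add_zero, derivative_sum, Finset.sum_eq_single 0]
    · simp
    · intro γ _ hγ
      rw [derivative_C_mul_X_pow, Nat.cast_pow, hqK, zero_pow hγ, mul_zero, C_0, zero_mul]
    · simp
  refine ⟨0, C (a 0)⁻¹, ?_⟩
  rw [hder, ← C_mul, inv_mul_cancel₀ ha0, C_1, zero_mul, zero_add]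

theorem natDegree_sum_C_mul_X_pow_pow_add_C (hq : 1 < q) (r : ℕ) {a : ℕ → K}
    (har : a r ≠ 0) (c : K) :
    (∑ γ ∈ Finset.range (r + 1), C (a γ) * X ^ q ^ γ + C c).natDegree = q ^ r := by
  have hlow : (∑ γ ∈ Finset.range r, C (a γ) * X ^ q ^ γ + C c).natDegree < q ^ r := by
    refine (natDegree_add_le _ _).trans_lt (max_lt ?_ (by simpa using pow_pos (by omega) r))
    cases r with
    | zero => simp
    | succ s =>
      refine (natDegree_sum_le_of_forall_le _ _ fun γ hγ => ?_).trans_lt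
        (Nat.pow_lt_pow_right hq s.lt_succ_self)
      exact (natDegree_C_mul_X_pow_le _ _).trans
        (Nat.pow_le_pow_right (by omega) (Nat.lt_succ_iff.mp (Finset.mem_range.mp hγ)))
  rw [Finset.sum_range_succ, add_right_comm, natDegree_add_eq_right_of_natDegree_lt] <;>
    rw [natDegree_C_mul_X_pow _ _ har]
  exact hlow

theorem card_setOf_sum_pow_add_eq_zero [IsAlgClosed K] (hq : 1 < q) (hqK : (q : K) = 0)
    (r : ℕ) {a : ℕ → K} (ha0 : a 0 ≠ 0) (har : a r ≠ 0) (c : K) :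
    Nat.card {y : K | ∑ γ ∈ Finset.range (r + 1), a γ * y ^ q ^ γ + c = 0} = q ^ r := by
  set g := ∑ γ ∈ Finset.range (r + 1), C (a γ) * X ^ q ^ γ + C c
  have hdeg : g.natDegree = q ^ r := natDegree_sum_C_mul_X_pow_pow_add_C hq r har c
  have hg : g ≠ 0 := fun h => by
    rw [h, natDegree_zero] at hdeg; exact (pow_pos (by omega) r).ne hdeg
  have hset : {y : K | ∑ γ ∈ Finset.range (r + 1), a γ * y ^ q ^ γ + c = 0} = g.rootSet K := by
    ext y
    simp [g, mem_rootSet, hg, eval_finsetSum]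
  rw [hset, Nat.card_eq_fintype_card, card_rootSet_eq_natDegree
    (separable_sum_C_mul_X_pow_pow_add_C hqK r ha0 c) (IsAlgClosed.splits _), hdeg]

theorem exists_sum_pow_eq [IsAlgClosed K] (hq : 1 < q) (hqK : (q : K) = 0) (r : ℕ)
    {a : ℕ → K} (ha0 : a 0 ≠ 0) (har : a r ≠ 0) (c : K) :
    ∃ y, ∑ γ ∈ Finset.range (r + 1), a γ * y ^ q ^ γ = c := by
  have h := card_setOf_sum_pow_add_eq_zero hq hqK r ha0 har (-c)
  obtain ⟨⟨y, hy⟩⟩ := (Nat.card_ne_zero.mp (h.trans_ne (pow_pos (by omega) r).ne')).1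
  exact ⟨y, by simpa [← sub_eq_add_neg, sub_eq_zero] using hy⟩

end HeadPolynomial

section HeadKernel

variable (K : Type*) [Field K] (p : ℕ) [Fact p.Prime] [CharP K p] (n r : ℕ) (a : ℕ → K)

def frobeniusFixedField : Subfield K := (iterateFrobenius K p n).eqLocusField (RingHom.id K)

variable {K p n} in
theorem mem_frobeniusFixedField {x : K} : x ∈ frobeniusFixedField K p n ↔ x ^ p ^ n = x :=
  Iff.rfl

theorem pow_pow_pow_of_mem_frobeniusFixedField {c : K} (hc : c ∈ frobeniusFixedField K p n)
    (γ : ℕ) : c ^ (p ^ n) ^ γ = c := by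
  rw [← pow_mul, ← iterateFrobenius_def, coe_iterateFrobenius_mul]
  exact Function.iterate_fixed hc γ

def headLinearMap : K →ₗ[frobeniusFixedField K p n] K where
  toFun y := ∑ γ ∈ Finset.range (r + 1), a γ * y ^ (p ^ n) ^ γ
  map_add' x y := by
    simp only [← pow_mul, add_pow_char_pow, mul_add, Finset.sum_add_distrib]
  map_smul' c y := by
    simp only [Subfield.smul_def, smul_eq_mul, mul_pow, RingHom.id_apply, Finset.mul_sum,
      pow_pow_pow_of_mem_frobeniusFixedField K p n c.2]
    exact Finset.sum_congr rfl fun _ _ => by ring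

variable {K p n r a}

theorem mem_ker_headLinearMap {y : K} :
    y ∈ LinearMap.ker (headLinearMap K p n r a) ↔
      ∑ γ ∈ Finset.range (r + 1), a γ * y ^ (p ^ n) ^ γ = 0 :=
  LinearMap.mem_ker

variable [IsAlgClosed K]

theorem card_frobeniusFixedField (hn : n ≠ 0) : Nat.card (frobeniusFixedField K p n) = p ^ n := by
  open Polynomial in
  have hp : 1 < p := (Fact.out : p.Prime).one_lt
  have hset : (frobeniusFixedField K p n : Set K) = (X ^ p ^ n - X : K[X]).rootSet K := by
    ext x
    simp [mem_rootSet, FiniteField.X_pow_card_pow_sub_X_ne_zero K hn hp, sub_eq_zero,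
      mem_frobeniusFixedField]
  rw [← SetLike.coe_sort_coe, hset, Nat.card_eq_fintype_card,
    card_rootSet_eq_natDegree (galois_poly_separable p _ (dvd_pow_self p hn))
      (IsAlgClosed.splits _), FiniteField.X_pow_card_pow_sub_X_natDegree_eq K hn hp]

theorem card_ker_headLinearMap (hn : n ≠ 0) (ha0 : a 0 ≠ 0) (har : a r ≠ 0) :
    Nat.card (LinearMap.ker (headLinearMap K p n r a)) = (p ^ n) ^ r := by
  refine (Nat.card_congr (Equiv.subtypeEquivRight fun _ => mem_ker_headLinearMap)).trans ?_
  have h := card_setOf_sum_pow_add_eq_zero (Nat.one_lt_pow hn (Fact.out : p.Prime).one_lt)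
    (by simp [hn]) r ha0 har 0
  simp only [add_zero] at h
  exact h

theorem nonempty_basis_ker_headLinearMap (hn : n ≠ 0) (ha0 : a 0 ≠ 0) (har : a r ≠ 0) :
    Nonempty (Module.Basis (Fin r) (frobeniusFixedField K p n)
      (LinearMap.ker (headLinearMap K p n r a))) := by
  have hq : 1 < p ^ n := Nat.one_lt_pow hn (Fact.out : p.Prime).one_lt
  have hcardW := card_ker_headLinearMap hn ha0 har
  have hcardF := card_frobeniusFixedField (K := K) hn
  have := Nat.finite_of_card_ne_zero (hcardW.trans_ne (pow_pos (by omega) r).ne')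
  have := Nat.finite_of_card_ne_zero (hcardF.trans_ne (by omega))
  let := Fintype.ofFinite (frobeniusFixedField K p n)
  let := Fintype.ofFinite (LinearMap.ker (headLinearMap K p n r a))
  have := Module.Free.of_divisionRing (frobeniusFixedField K p n)
    (LinearMap.ker (headLinearMap K p n r a))
  have h := Module.card_eq_pow_finrank (K := frobeniusFixedField K p n)
    (V := LinearMap.ker (headLinearMap K p n r a))
  rw [← Nat.card_eq_fintype_card, ← Nat.card_eq_fintype_card, hcardW, hcardF] at h
  exact ⟨Module.finBasisOfFinrankEq _ _ (Nat.pow_right_injective hq h).symm⟩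

end HeadKernel

open PowerSeries

section Frobenius

variable {K : Type*} [Field K]

theorem coeff_sigma_iterate (q γ : ℕ) (A : K⟦X⟧) (i : ℕ) :
    coeff i ((sigma q)^[γ] A) = coeff i A ^ q ^ γ := by
  induction γ generalizing A with
  | zero => simp
  | succ γ ih =>
    rw [Function.iterate_succ_apply, ih, sigma, coeff_mk, ← pow_mul, pow_succ', mul_comm]

variable {p : ℕ} [Fact p.Prime] [CharP K p] {n : ℕ}

theorem sigma_pow_eq_map : sigma (p ^ n) = ⇑(PowerSeries.map (iterateFrobenius K p n)) := by
  funext A; ext i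
  rw [sigma, coeff_mk, coeff_map, iterateFrobenius_def]

theorem sigma_pow_eq_self_iff {A : K⟦X⟧} :
    sigma (p ^ n) A = A ↔ ∀ m, coeff m A ∈ frobeniusFixedField K p n := by
  simp only [PowerSeries.ext_iff, sigma, coeff_mk, mem_frobeniusFixedField]

end Frobenius

section ActP

variable {K : Type*} [Field K] {p : ℕ} [Fact p.Prime] [CharP K p] {n : ℕ} {r nn : ℕ}
  {a : ℕ → K} {b : ℕ → ℕ → K}

theorem actP_add (A B : K⟦X⟧) :
    actP (p ^ n) r nn a b (A + B) = actP (p ^ n) r nn a b A + actP (p ^ n) r nn a b B := by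
  simp only [actP, sigma_pow_eq_map, iterate_map_add, mul_add, Finset.sum_add_distrib]
  ring

theorem actP_mul_of_sigma_eq {A : K⟦X⟧} (hA : sigma (p ^ n) A = A) (B : K⟦X⟧) :
    actP (p ^ n) r nn a b (A * B) = A * actP (p ^ n) r nn a b B := by
  rw [sigma_pow_eq_map] at hA
  simp only [actP, sigma_pow_eq_map, iterate_map_mul, Function.iterate_fixed hA, mul_add,
    Finset.mul_sum]
  congr 1 <;> refine Finset.sum_congr rfl fun _ _ => ?_
  · ring
  · exact Finset.sum_congr rfl fun _ _ => by ring

theorem sigma_pow_C_of_mem {c : K} (hc : c ∈ frobeniusFixedField K p n) :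
    sigma (p ^ n) (C c) = C c :=
  sigma_pow_eq_self_iff.mpr fun m => by rw [coeff_C]; split_ifs <;> simp [hc]

theorem actP_X_mul (B : K⟦X⟧) :
    actP (p ^ n) r nn a b (X * B) = X * actP (p ^ n) r nn a b B :=
  actP_mul_of_sigma_eq (sigma_pow_eq_self_iff.mpr fun m => by
    rw [coeff_X]; split_ifs <;> simp) B

theorem actP_sub (A B : K⟦X⟧) :
    actP (p ^ n) r nn a b (A - B) = actP (p ^ n) r nn a b A - actP (p ^ n) r nn a b B :=
  map_sub (AddMonoidHom.mk' (actP (p ^ n) r nn a b) actP_add) A B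

theorem actP_sum {ι : Type*} (s : Finset ι) (f : ι → K⟦X⟧) :
    actP (p ^ n) r nn a b (∑ i ∈ s, f i) = ∑ i ∈ s, actP (p ^ n) r nn a b (f i) :=
  map_sum (AddMonoidHom.mk' (actP (p ^ n) r nn a b) actP_add) f s

theorem constantCoeff_actP (q : ℕ) (A : K⟦X⟧) :
    constantCoeff (actP q r nn a b A) =
      ∑ γ ∈ Finset.range (r + 1), a γ * constantCoeff A ^ q ^ γ := by
  have hsig : ∀ γ, constantCoeff ((sigma q)^[γ] A) = constantCoeff A ^ q ^ γ := fun γ => by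
    simpa only [coeff_zero_eq_constantCoeff_apply] using coeff_sigma_iterate q γ A 0
  rw [actP, map_add, map_sum, map_sum, Finset.sum_eq_zero (s := Finset.Icc 1 nn), add_zero]
  · simp only [map_mul, constantCoeff_C, hsig]
  · intro β hβ
    have hβ0 : β ≠ 0 := by have := (Finset.mem_Icc.mp hβ).1; omega
    simp [hβ0]

end ActP

section Solutions

variable {K : Type*} [Field K] {p : ℕ} [Fact p.Prime] [CharP K p] {n : ℕ} {r nn : ℕ}
  {a : ℕ → K} {b : ℕ → ℕ → K}

theorem actP_surjective
    (hL : ∀ c : K, ∃ y, ∑ γ ∈ Finset.range (r + 1), a γ * y ^ (p ^ n) ^ γ = c) :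
    Function.Surjective (actP (p ^ n) r nn a b) := by
  have hstep : ∀ E, ∃ y : K, ∃ E', E = actP (p ^ n) r nn a b (C y) + X * E' := by
    intro E
    obtain ⟨y, hy⟩ := hL (constantCoeff E)
    have h0 : constantCoeff (E - actP (p ^ n) r nn a b (C y)) = 0 := by
      rw [map_sub, constantCoeff_actP, constantCoeff_C, hy, sub_self]
    refine ⟨y, mk fun i => coeff (i + 1) (E - actP (p ^ n) r nn a b (C y)), ?_⟩
    rw [← sub_eq_iff_eq_add']
    exact eq_X_mul_shift_of_constantCoeff_eq_zero h0
  intro E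
  obtain ⟨A, -, hA⟩ := exists_eq_of_forall_eq_add_X_mul (ι := Unit)
    (fun A => actP (p ^ n) r nn a b (A ())) (fun A B => actP_add (A ()) (B ()))
    (fun A => actP_X_mul (A ())) Set.univ Set.univ
    (fun E _ => have ⟨y, E', h⟩ := hstep E; ⟨fun _ => y, trivial, E', trivial, h⟩)
    (Set.mem_univ E)
  exact ⟨A (), hA⟩

theorem exists_actP_eq_zero_constantCoeff_eq
    (hL : ∀ c : K, ∃ y, ∑ γ ∈ Finset.range (r + 1), a γ * y ^ (p ^ n) ^ γ = c) {w : K}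
    (hw : ∑ γ ∈ Finset.range (r + 1), a γ * w ^ (p ^ n) ^ γ = 0) :
    ∃ B, actP (p ^ n) r nn a b B = 0 ∧ constantCoeff B = w := by
  obtain ⟨E, hE⟩ : X ∣ actP (p ^ n) r nn a b (C w) := by
    rw [X_dvd_iff, constantCoeff_actP, constantCoeff_C, hw]
  obtain ⟨Z, hZ⟩ := actP_surjective (nn := nn) (b := b) hL (-E)
  refine ⟨C w + X * Z, ?_, by simp⟩
  rw [actP_add, actP_X_mul, hZ, hE]
  ring

end Solutions

section Uniqueness

variable {K : Type*} [Field K] {F : Subfield K} {ι : Type*} [Fintype ι] {w : ι → K}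
  {B : ι → K⟦X⟧}

theorem constantCoeff_eq_zero_of_sum_mul_eq_zero (hw : LinearIndependent F w)
    (hB : ∀ j, constantCoeff (B j) = w j) {A : ι → K⟦X⟧} (hA : ∀ j, constantCoeff (A j) ∈ F)
    (hsum : ∑ j, A j * B j = 0) (j : ι) : constantCoeff (A j) = 0 := by
  have h := congrArg constantCoeff hsum
  simp only [map_sum, map_mul, hB, map_zero] at h
  exact congrArg Subtype.val
    (Fintype.linearIndependent_iff.mp hw (fun j => ⟨_, hA j⟩) h j)

theorem eq_zero_of_sum_mul_eq_zero (hw : LinearIndependent F w)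
    (hB : ∀ j, constantCoeff (B j) = w j) {A : ι → K⟦X⟧} (hA : ∀ j m, coeff m (A j) ∈ F)
    (hsum : ∑ j, A j * B j = 0) : A = 0 := by
  suffices ∀ m (A : ι → K⟦X⟧), (∀ j m, coeff m (A j) ∈ F) → ∑ j, A j * B j = 0 →
      ∀ j, coeff m (A j) = 0 by
    funext j; ext m; exact this m A hA hsum j
  intro m
  induction m with
  | zero =>
    intro A hA hsum j
    simpa using constantCoeff_eq_zero_of_sum_mul_eq_zero hw hB (fun j => by simpa using hA j 0)
      hsum j
  | succ m ih =>
    intro A hA hsum j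
    have hA0 := constantCoeff_eq_zero_of_sum_mul_eq_zero hw hB (fun j => by simpa using hA j 0)
      hsum
    set A' : ι → K⟦X⟧ := fun j => mk fun i => coeff (i + 1) (A j)
    have hXA : ∀ j, A j = X * A' j := fun j => eq_X_mul_shift_of_constantCoeff_eq_zero (hA0 j)
    have hsum' : ∑ j, A' j * B j = 0 := by
      simp only [hXA, mul_assoc, ← Finset.mul_sum] at hsum
      exact (mul_eq_zero.mp hsum).resolve_left X_ne_zero
    rw [hXA, coeff_succ_X_mul]
    exact ih A' (fun j i => by simpa [A'] using hA j (i + 1)) hsum' j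

end Uniqueness

section Existence

variable {K : Type*} [Field K] {p : ℕ} [Fact p.Prime] [CharP K p] {n : ℕ} {r nn : ℕ}
  {a : ℕ → K} {b : ℕ → ℕ → K}

variable {ι : Type*} [Fintype ι]
  (bW : Module.Basis ι (frobeniusFixedField K p n) (LinearMap.ker (headLinearMap K p n r a)))
  {B : ι → K⟦X⟧} (hB : ∀ j, actP (p ^ n) r nn a b (B j) = 0)
  (hB0 : ∀ j, constantCoeff (B j) = bW j)
include hB hB0

theorem exists_eq_sum_C_mul_add_X_mul {E : K⟦X⟧} (hE : actP (p ^ n) r nn a b E = 0) :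
    ∃ c : ι → K, (∀ j, c j ∈ frobeniusFixedField K p n) ∧
      ∃ E', actP (p ^ n) r nn a b E' = 0 ∧ E = ∑ j, C (c j) * B j + X * E' := by
  have hz : constantCoeff E ∈ LinearMap.ker (headLinearMap K p n r a) := by
    rw [mem_ker_headLinearMap, ← constantCoeff_actP, hE, map_zero]
  set c := bW.repr ⟨_, hz⟩
  have hzc : constantCoeff E = ∑ j, (c j : K) * bW j := by
    have h := congrArg Subtype.val (bW.sum_repr ⟨_, hz⟩).symm
    simpa only [Submodule.coe_sum, Submodule.coe_smul, Subfield.smul_def, smul_eq_mul] using h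
  set D := E - ∑ j, C (c j : K) * B j
  have hD : actP (p ^ n) r nn a b D = 0 := by
    simp only [D, actP_sub, actP_sum, hE, zero_sub, neg_eq_zero]
    refine Finset.sum_eq_zero fun j _ => ?_
    rw [actP_mul_of_sigma_eq (sigma_pow_C_of_mem (c j).2), hB, mul_zero]
  have hD0 : constantCoeff D = 0 := by
    simp [D, hzc, hB0]
  have hXD := eq_X_mul_shift_of_constantCoeff_eq_zero hD0
  refine ⟨fun j => c j, fun j => (c j).2, mk fun i => coeff (i + 1) D, ?_, ?_⟩
  · rw [hXD, actP_X_mul] at hD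
    exact (mul_eq_zero.mp hD).resolve_left X_ne_zero
  · rw [← hXD]
    exact sub_eq_iff_eq_add'.mp rfl

theorem exists_sum_mul_eq_of_actP_eq_zero {E : K⟦X⟧} (hE : actP (p ^ n) r nn a b E = 0) :
    ∃ A : ι → K⟦X⟧, (∀ j m, coeff m (A j) ∈ frobeniusFixedField K p n) ∧
      ∑ j, A j * B j = E := by
  obtain ⟨A, hA, hAE⟩ := exists_eq_of_forall_eq_add_X_mul (fun A => ∑ j, A j * B j)
    (fun A A' => by simp only [Pi.add_apply, add_mul, Finset.sum_add_distrib])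
    (fun A => by simp only [mul_assoc, Finset.mul_sum])
    {E | actP (p ^ n) r nn a b E = 0} {c | ∀ j, c j ∈ frobeniusFixedField K p n}
    (fun E hE => exists_eq_sum_C_mul_add_X_mul bW hB hB0 hE) hE
  exact ⟨A, fun j m => hA m j, hAE⟩

end Existence

theorem stmt6_general {p n q : ℕ} [Fact p.Prime] (hn : 0 < n) (hq : q = p ^ n)
    {K : Type*} [Field K] [CharP K p] [IsAlgClosed K]
    (r nn : ℕ) (a : ℕ → K) (b : ℕ → ℕ → K)
    (ha0 : a 0 ≠ 0) (har : a r ≠ 0) :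
    (∀ x : ℕ → K, ∑ γ ∈ Finset.range (r + 1), a γ * (x 0) ^ q ^ γ = 0 →
      ∀ i, 1 ≤ i →
        Nat.card {y : K |
          ∑ γ ∈ Finset.range (r + 1), a γ * y ^ q ^ γ +
          ∑ β ∈ Finset.Icc 1 nn, ∑ γ ∈ Finset.range r,
            b β γ * (if β ≤ i then x (i - β) else 0) ^ q ^ γ = 0} = q ^ r) ∧
    (∃ B : Fin r → PowerSeries K,
      (∀ j, actP q r nn a b (B j) = 0) ∧
      ∀ X : PowerSeries K, actP q r nn a b X = 0 →
        ∃! A : Fin r → PowerSeries K,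
          (∀ j, sigma q (A j) = A j) ∧ X = ∑ j, A j * B j) := by
  subst hq
  have hq : 1 < p ^ n := Nat.one_lt_pow hn.ne' (Fact.out : p.Prime).one_lt
  have hqK : ((p ^ n : ℕ) : K) = 0 := by simp [hn.ne']
  refine ⟨fun x _ i _ => card_setOf_sum_pow_add_eq_zero hq hqK r ha0 har _, ?_⟩
  obtain ⟨bW⟩ := nonempty_basis_ker_headLinearMap hn.ne' ha0 har
  choose B hB hB0 using fun j => exists_actP_eq_zero_constantCoeff_eq (nn := nn) (b := b)
    (exists_sum_pow_eq hq hqK r ha0 har) (mem_ker_headLinearMap.mp (bW j).2)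
  refine ⟨B, hB, fun E hE => ?_⟩
  obtain ⟨A, hA, hAE⟩ := exists_sum_mul_eq_of_actP_eq_zero bW hB hB0 hE
  refine ⟨A, ⟨fun j => sigma_pow_eq_self_iff.mpr (hA j), hAE.symm⟩, ?_⟩
  rintro A' ⟨hA'σ, hA'E⟩
  have hw := bW.linearIndependent.map' _ (Submodule.ker_subtype _)
  refine sub_eq_zero.mp (eq_zero_of_sum_mul_eq_zero hw hB0 (A := A' - A)
    (fun j m => sub_mem (sigma_pow_eq_self_iff.mp (hA'σ j) m) (hA j m)) ?_)
  simp only [Pi.sub_apply, sub_mul, Finset.sum_sub_distrib, ← hA'E, hAE, sub_self]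

/-- For `P` as above with `a 0 ≠ 0`, `a r ≠ 0` and all tail degrees `< r` over an
algebraically closed `K`: for every `x₀` solving the head equation and every
`i ≥ 1`, the equation determining `x_i` from `x_0, …, x_{i-1}` has exactly `q^r`
solutions; and the set of solutions `X` to `P·X = 0` is a free
`𝔽_q[[T]]`-module of rank `r` (scalars `𝔽_q[[T]]` = σ-fixed power series). -/
theorem stmt6 {p n q : ℕ} [Fact p.Prime] (hn : 0 < n) (hq : q = p ^ n)
    {K : Type*} [Field K] [CharP K p] [IsAlgClosed K]
    (r nn : ℕ) (hr : 1 ≤ r) (a : ℕ → K) (b : ℕ → ℕ → K)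
    (ha0 : a 0 ≠ 0) (har : a r ≠ 0) :
    (∀ x : ℕ → K, ∑ γ ∈ Finset.range (r + 1), a γ * (x 0) ^ q ^ γ = 0 →
      ∀ i, 1 ≤ i →
        Nat.card {y : K |
          ∑ γ ∈ Finset.range (r + 1), a γ * y ^ q ^ γ +
          ∑ β ∈ Finset.Icc 1 nn, ∑ γ ∈ Finset.range r,
            b β γ * (if β ≤ i then x (i - β) else 0) ^ q ^ γ = 0} = q ^ r) ∧
    (∃ B : Fin r → PowerSeries K,
      (∀ j, actP q r nn a b (B j) = 0) ∧
      ∀ X : PowerSeries K, actP q r nn a b X = 0 →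
        ∃! A : Fin r → PowerSeries K,
          (∀ j, sigma q (A j) = A j) ∧ X = ∑ j, A j * B j) :=
  stmt6_general hn hq r nn a b ha0 har
end

section
/- Let K be a field of characteristic p containing F_q and let 𝔓 = (P_{ij}) be an n×n matrix over K[T]{τ} with each P_{ij} of degree at most k in τ. Then there exist C_1,…,C_n ∈ K[T]{τ}, not all zero, each of degree at most k(n−1) in τ, such that ∑_{i=1}^n C_i P_{ij} = 0 for all j = 2,…,n. -/
/-!
Write `C_i = ∑_{a ≤ d} c_{ia} τ^a`. Because the unknowns stand to the left of `P_{ij}`, the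
Frobenius twist only hits the known coefficients of `P_{ij}`, so every `τ^m`-coefficient of
`∑_i C_i P_{ij}` is a `K[T]`-linear form in the `c_{ia}`, and it vanishes for `m > k + d`.
With `d = k(n-1)` this is a system of `(n-1)(kn+1)` equations in `n(k(n-1)+1)` unknowns, and over
a nontrivial commutative ring (strong rank condition) such a system has a nonzero solution.
-/

/-- The `q^i`-power Frobenius twist of a polynomial in `K[T]`, applied
coefficientwise. -/
noncomputable def twist {K : Type*} [CommSemiring K] (q i : ℕ) (c : Polynomial K) :
    Polynomial K :=
  c.sum fun k a => Polynomial.C (a ^ q ^ i) * Polynomial.X ^ k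

/-- Multiplication in the Anderson ring `K[T]{τ}`: elements `∑_γ c_γ(T) τ^γ` are
represented as polynomials in the outer variable `τ` with coefficients in
`K[T]`, and `τ^i · c(T) = c^{(i)}(T) · τ^i` where `c^{(i)}` raises each
coefficient to the power `q^i`. -/
noncomputable def tmulA {K : Type*} [CommSemiring K] (q : ℕ)
    (f g : Polynomial (Polynomial K)) : Polynomial (Polynomial K) :=
  ∑ i ∈ f.support, ∑ j ∈ g.support,
    Polynomial.C (f.coeff i * twist q i (g.coeff j)) * Polynomial.X ^ (i + j)

open Polynomial Matrix

theorem Matrix.exists_mulVec_eq_zero_of_card_lt {R m n : Type*} [CommRing R] [Nontrivial R]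
    [Fintype m] [Fintype n] (M : Matrix m n R) (h : Fintype.card m < Fintype.card n) :
    ∃ v ≠ 0, M *ᵥ v = 0 := by
  by_contra! hM
  have hinj : Function.Injective M.mulVecLin :=
    (injective_iff_map_eq_zero _).2 fun v hv => by_contra fun hv0 => hM v hv0 hv
  have := LinearMap.finrank_le_finrank_of_injective hinj
  simp only [Module.finrank_fintype_fun_eq_card] at this
  omega

section Anderson

variable {K : Type*} [CommSemiring K] (q : ℕ)

lemma twist_zero (i : ℕ) : twist q i (0 : K[X]) = 0 := by
  simp [twist]

lemma natDegree_tmulA_le (f g : K[X][X]) :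
    (tmulA q f g).natDegree ≤ f.natDegree + g.natDegree := by
  refine natDegree_sum_le_of_forall_le _ _ fun i hi =>
    natDegree_sum_le_of_forall_le _ _ fun j hj => ?_
  refine natDegree_C_mul_X_pow_le _ _ |>.trans ?_
  exact add_le_add (le_natDegree_of_mem_supp i hi) (le_natDegree_of_mem_supp j hj)

lemma coeff_tmulA (f g : K[X][X]) (m : ℕ) {u : ℕ} (hf : f.natDegree < u) :
    (tmulA q f g).coeff m
      = ∑ a : Fin u, f.coeff a * if (a : ℕ) ≤ m then twist q a (g.coeff (m - a)) else 0 := by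
  have hrow : ∀ i, (∑ j ∈ g.support, if m = i + j then f.coeff i * twist q i (g.coeff j) else 0)
      = f.coeff i * if i ≤ m then twist q i (g.coeff (m - i)) else 0 := by
    intro i
    split_ifs with him
    · rw [Finset.sum_congr rfl fun j _ => if_congr (show m = i + j ↔ m - i = j by omega) rfl rfl,
        Finset.sum_ite_eq]
      split_ifs with hmem
      · rfl
      · rw [notMem_support_iff.mp hmem, twist_zero, mul_zero]
    · rw [mul_zero]
      exact Finset.sum_eq_zero fun j _ => if_neg (by omega)
  simp only [tmulA, finsetSum_coeff, coeff_C_mul_X_pow, hrow]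
  rw [Fin.sum_univ_eq_sum_range
    (fun a => f.coeff a * if a ≤ m then twist q a (g.coeff (m - a)) else 0)]
  refine Finset.sum_subset (supp_subset_range hf) fun a _ ha => ?_
  rw [notMem_support_iff.mp ha, zero_mul]

end Anderson

section Cofactors

variable {K : Type*} [CommRing K] [Nontrivial K] (q : ℕ)

/-- Row `(j, m)` is the `τ^m`-coefficient of `∑_i C_i P_{ij}`, column `(i, a)` the unknown
`τ^a`-coefficient of `C_i`. -/
noncomputable def cofactorSystem {ι J : Type*} (k d : ℕ) (P : ι → J → K[X][X]) :
    Matrix (J × Fin (k + d + 1)) (ι × Fin (d + 1)) K[X] :=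
  fun w v => if (v.2 : ℕ) ≤ w.2 then twist q v.2 ((P v.1 w.1).coeff (w.2 - v.2)) else 0

theorem exists_cofactors_of_card_mul_lt {ι J : Type*} [Fintype ι] [Fintype J] (k d : ℕ)
    (P : ι → J → K[X][X]) (hP : ∀ i j, (P i j).natDegree ≤ k)
    (hcard : Fintype.card J * (k + d + 1) < Fintype.card ι * (d + 1)) :
    ∃ C : ι → K[X][X], (∃ i, C i ≠ 0) ∧ (∀ i, (C i).natDegree ≤ d) ∧
      ∀ j, ∑ i, tmulA q (C i) (P i j) = 0 := by
  obtain ⟨c, hc0, hc⟩ := (cofactorSystem q k d P).exists_mulVec_eq_zero_of_card_lt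
    (by simpa only [Fintype.card_prod, Fintype.card_fin] using hcard)
  let C i : K[X][X] := (degreeLTEquiv K[X] (d + 1)).symm fun a => c (i, a)
  have hCcoeff i (a : Fin (d + 1)) : (C i).coeff a = c (i, a) :=
    congrFun ((degreeLTEquiv K[X] (d + 1)).apply_symm_apply _) a
  have hCdeg i : (C i).natDegree ≤ d := by
    have hmem : C i ∈ degreeLE K[X] d := by
      rw [← degreeLT_succ_eq_degreeLE]
      exact Subtype.prop _
    rwa [mem_degreeLE, ← natDegree_le_iff_degree_le] at hmem
  refine ⟨C, ?_, hCdeg, fun j => ?_⟩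
  · obtain ⟨⟨i, a⟩, hia⟩ := Function.ne_iff.mp hc0
    exact ⟨i, fun hCi => hia (by rw [← hCcoeff, hCi, coeff_zero, Pi.zero_apply])⟩
  refine Polynomial.ext fun m => ?_
  rw [coeff_zero, finsetSum_coeff]
  by_cases hm : m < k + d + 1
  · have hrow := congrFun hc (j, ⟨m, hm⟩)
    rw [Pi.zero_apply, mulVec, dotProduct, Fintype.sum_prod_type] at hrow
    rw [← hrow]
    refine Finset.sum_congr rfl fun i _ => ?_
    rw [coeff_tmulA q _ _ m (Nat.lt_succ_of_le (hCdeg i))]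
    exact Finset.sum_congr rfl fun a _ => by rw [hCcoeff, mul_comm]; rfl
  · refine Finset.sum_eq_zero fun i _ => coeff_eq_zero_of_natDegree_lt ?_
    have := add_le_add (hCdeg i) (hP i j)
    exact (natDegree_tmulA_le q _ _).trans_lt (by omega)

end Cofactors

theorem stmt8_general {q : ℕ}
    {K : Type*} [Field K]
    (nn k : ℕ) (hnn : 1 ≤ nn)
    (P : Fin nn → Fin nn → Polynomial (Polynomial K))
    (hP : ∀ i j, (P i j).natDegree ≤ k) :
    ∃ C : Fin nn → Polynomial (Polynomial K),
      (∃ i, C i ≠ 0) ∧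
      (∀ i, (C i).natDegree ≤ k * (nn - 1)) ∧
      ∀ j : Fin nn, 1 ≤ (j : ℕ) → ∑ i, tmulA q (C i) (P i j) = 0 := by
  obtain ⟨m, rfl⟩ : ∃ m, nn = m + 1 := ⟨nn - 1, by omega⟩
  have hcard : m * (k + k * m + 1) < (m + 1) * (k * m + 1) := by nlinarith
  obtain ⟨C, hC0, hCdeg, hC⟩ := exists_cofactors_of_card_mul_lt q k (k * m)
    (fun (i : Fin (m + 1)) (j : Fin m) => P i j.succ) (fun i j => hP i j.succ)
    (by simpa only [Fintype.card_fin])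
  refine ⟨C, hC0, hCdeg, fun j hj => ?_⟩
  obtain ⟨j, rfl⟩ := Fin.exists_succ_eq.mpr (Fin.pos_iff_ne_zero.mp hj)
  exact hC j

/-- Existence of cofactors: for an `nn × nn` matrix `𝔓 = (P_{ij})` over
`K[T]{τ}` with all entries of `τ`-degree at most `k`, there are
`C_1, …, C_nn ∈ K[T]{τ}`, not all zero, each of `τ`-degree at most `k(nn−1)`,
with `∑_i C_i P_{ij} = 0` for all columns `j ≥ 2` (indexed here by `j ≠ 0`). -/
theorem stmt8 {p n q : ℕ} [Fact p.Prime] (hn : 0 < n) (hq : q = p ^ n)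
    {K : Type*} [Field K] [CharP K p]
    (nn k : ℕ) (hnn : 1 ≤ nn)
    (P : Fin nn → Fin nn → Polynomial (Polynomial K))
    (hP : ∀ i j, (P i j).natDegree ≤ k) :
    ∃ C : Fin nn → Polynomial (Polynomial K),
      (∃ i, C i ≠ 0) ∧
      (∀ i, (C i).natDegree ≤ k * (nn - 1)) ∧
      ∀ j : Fin nn, 1 ≤ (j : ℕ) → ∑ i, tmulA q (C i) (P i j) = 0 :=
  stmt8_general nn k hnn P hP
end

section
/- Consider the Drinfeld module of rank r over C_∞ with T e = θ e + a_1 τ e + ⋯ + a_{r−1} τ^{r−1} e + τ^r e, and its associated matrix 𝔓 = Q^t τ − I_r for the basis (e, τe, …, τ^{r−1}e). Setting y_{r−1} = ∑_i x_i T^i, elimination of y_0,…,y_{r−2} from the system Y^{(1)} Q = Y yields, for every i ≥ 1, the single affine equation θ^{q^{r−1}} x_i^{q^r} + a_1^{q^{r−2}} x_i^{q^{r−1}} + a_2^{q^{r−3}} x_i^{q^{r−2}} + ⋯ + a_{r−1} x_i^{q} + x_i − x_{i−1}^{q^r} = 0, and for i = 0 the same equation without the term −x_{−1}^{q^r}.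 -/
open Finset

namespace RingHom

variable {R : Type*} [NonAssocSemiring R] (σ : R →+* R) (k : ℕ) (x : R)

theorem pow_succ_apply : (σ ^ (k + 1)) x = (σ ^ k) (σ x) :=
  Function.iterate_succ_apply σ k x

theorem pow_succ_apply' : (σ ^ (k + 1)) x = σ ((σ ^ k) x) :=
  Function.iterate_succ_apply' σ k x

end RingHom

section TwistedRecursion

variable {R : Type*} [CommRing R] (σ : R →+* R) (c Y : ℕ → R) (s : ℕ)

theorem eq_pow_apply_sub_sum_of_twisted_recursion
    (hY : ∀ j, 1 ≤ j → j ≤ s → -c j * σ (Y s) + σ (Y (j - 1)) = Y j) :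
    ∀ j ≤ s, Y j = (σ ^ j) (Y 0) -
      ∑ i ∈ Icc 1 j, (σ ^ (j - i)) (c i) * (σ ^ (j + 1 - i)) (Y s) := by
  intro j
  induction j with
  | zero => simp
  | succ j ih =>
    intro hj
    have hstep : ∀ i ∈ Icc 1 j,
        σ ((σ ^ (j - i)) (c i) * (σ ^ (j + 1 - i)) (Y s)) =
          (σ ^ (j + 1 - i)) (c i) * (σ ^ (j + 1 + 1 - i)) (Y s) := by
      intro i hi
      obtain ⟨-, hij⟩ := mem_Icc.mp hi
      rw [map_mul, ← RingHom.pow_succ_apply', ← RingHom.pow_succ_apply', ← Nat.sub_add_comm hij,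
        ← Nat.sub_add_comm (by omega : i ≤ j + 1)]
    rw [← hY (j + 1) (by omega) hj, Nat.add_sub_cancel, ih (by omega), map_sub, map_sum,
      sum_congr rfl hstep, sum_Icc_succ_top (by omega), RingHom.pow_succ_apply']
    simp only [Nat.sub_self, pow_zero, RingHom.coe_one, id_eq, Nat.add_sub_cancel_left, pow_one]
    ring

theorem pow_apply_eq_add_sum_of_twisted_recursion
    (hY : ∀ j, 1 ≤ j → j ≤ s → -c j * σ (Y s) + σ (Y (j - 1)) = Y j) :
    (σ ^ s) (Y 0) = Y s + ∑ j ∈ Icc 1 s, (σ ^ (s - j)) (c j) * (σ ^ (s + 1 - j)) (Y s) := by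
  linear_combination -eq_pow_apply_sub_sum_of_twisted_recursion σ c Y s hY s le_rfl

end TwistedRecursion

theorem PowerSeries.pow_map {R : Type*} [CommSemiring R] (f : R →+* R) (m : ℕ) :
    PowerSeries.map f ^ m = PowerSeries.map (f ^ m) := by
  induction m with
  | zero => ext; simp [PowerSeries.coeff_map]
  | succ m ih => rw [pow_succ, ih, pow_succ, RingHom.mul_def, RingHom.mul_def, PowerSeries.map_comp]

theorem iterateFrobenius_pow (K : Type*) [CommSemiring K] (p : ℕ) [ExpChar K p] (n m : ℕ) :
    iterateFrobenius K p n ^ m = iterateFrobenius K p (n * m) := by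
  ext x
  rw [RingHom.coe_pow, coe_iterateFrobenius_mul]

theorem sigma_eq_map {K : Type*} [CommSemiring K] (p : ℕ) [ExpChar K p] (n : ℕ) :
    sigma (p ^ n) = ⇑(PowerSeries.map (iterateFrobenius K p n)) := by
  ext f i
  simp [sigma, PowerSeries.coeff_map, iterateFrobenius_def]

theorem PowerSeries.coeff_succ_X_sub_C_mul {R : Type*} [CommRing R] (t : R) (f : PowerSeries R)
    (i : ℕ) :
    coeff (i + 1) ((X - C t) * f) = coeff i f - t * coeff (i + 1) f := by
  rw [sub_mul, map_sub, coeff_succ_X_mul, coeff_C_mul]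

theorem PowerSeries.coeff_zero_X_sub_C_mul {R : Type*} [CommRing R] (t : R) (f : PowerSeries R) :
    coeff 0 ((X - C t) * f) = -t * coeff 0 f := by
  simp [sub_mul]

theorem stmt12_general {p n q : ℕ} [Fact p.Prime] (hq : q = p ^ n)
    {K : Type*} [Field K] [CharP K p]
    (θ : K) (r : ℕ) (hr : 1 ≤ r) (a : ℕ → K)
    (Y : ℕ → PowerSeries K)
    (h0 : (PowerSeries.X - PowerSeries.C θ) * sigma q (Y (r - 1)) = Y 0)
    (hj : ∀ j, 1 ≤ j → j ≤ r - 1 →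
      -(PowerSeries.C (a j)) * sigma q (Y (r - 1)) + sigma q (Y (j - 1)) = Y j) :
    let x : ℕ → K := fun i => PowerSeries.coeff i (Y (r - 1))
    (∀ i, 1 ≤ i →
      θ ^ q ^ (r - 1) * (x i) ^ q ^ r +
      (∑ j ∈ Finset.Icc 1 (r - 1), (a j) ^ q ^ (r - 1 - j) * (x i) ^ q ^ (r - j)) +
      x i - (x (i - 1)) ^ q ^ r = 0) ∧
    (θ ^ q ^ (r - 1) * (x 0) ^ q ^ r +
      (∑ j ∈ Finset.Icc 1 (r - 1), (a j) ^ q ^ (r - 1 - j) * (x 0) ^ q ^ (r - j)) +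
      x 0 = 0) := by
  subst hq
  intro x
  rw [sigma_eq_map] at h0 hj
  set σ := PowerSeries.map (iterateFrobenius K p n)
  have hσ : ∀ m, σ ^ m = PowerSeries.map (iterateFrobenius K p (n * m)) := fun m => by
    rw [PowerSeries.pow_map, iterateFrobenius_pow]
  have hY := pow_apply_eq_add_sum_of_twisted_recursion σ (fun j => PowerSeries.C (a j)) Y _ hj
  rw [← h0, map_mul, ← RingHom.pow_succ_apply, Nat.sub_add_cancel hr, map_sub] at hY
  simp only [hσ, PowerSeries.map_X, PowerSeries.map_C, iterateFrobenius_def] at hY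
  have hcoeff := fun i => congrArg (PowerSeries.coeff i) hY
  simp only [map_add, map_sum, PowerSeries.coeff_C_mul, PowerSeries.coeff_map,
    iterateFrobenius_def, pow_mul] at hcoeff
  refine ⟨fun i hi => ?_, ?_⟩
  · obtain ⟨i, rfl⟩ : ∃ i', i = i' + 1 := ⟨i - 1, by omega⟩
    have h := hcoeff (i + 1)
    rw [PowerSeries.coeff_succ_X_sub_C_mul] at h
    simp only [PowerSeries.coeff_map, iterateFrobenius_def, pow_mul] at h
    simp only [x, Nat.add_sub_cancel]
    linear_combination -h
  · have h := hcoeff 0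
    rw [PowerSeries.coeff_zero_X_sub_C_mul] at h
    simp only [PowerSeries.coeff_map, iterateFrobenius_def, pow_mul] at h
    linear_combination -h

/-- Elimination for a rank-`r` Drinfeld module: if `Y = (y_0, …, y_{r-1})`
satisfies the system `Y^{(1)} Q = Y`, i.e. `(T−θ) y_{r-1}^{(1)} = y_0` and
`−a_j y_{r-1}^{(1)} + y_{j-1}^{(1)} = y_j` for `1 ≤ j ≤ r−1`, and
`y_{r-1} = ∑ x_i T^i`, then for all `i ≥ 1`
`θ^{q^{r-1}} x_i^{q^r} + ∑_{j=1}^{r-1} a_j^{q^{r-1-j}} x_i^{q^{r-j}} + x_i − x_{i-1}^{q^r} = 0`,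
and for `i = 0` the same equation without the last term. -/
theorem stmt12 {p n q : ℕ} [Fact p.Prime] (hn : 0 < n) (hq : q = p ^ n)
    {K : Type*} [Field K] [CharP K p] [IsAlgClosed K]
    (θ : K) (r : ℕ) (hr : 1 ≤ r) (a : ℕ → K)
    (Y : ℕ → PowerSeries K)
    (h0 : (PowerSeries.X - PowerSeries.C θ) * sigma q (Y (r - 1)) = Y 0)
    (hj : ∀ j, 1 ≤ j → j ≤ r - 1 →
      -(PowerSeries.C (a j)) * sigma q (Y (r - 1)) + sigma q (Y (j - 1)) = Y j) :
    let x : ℕ → K := fun i => PowerSeries.coeff i (Y (r - 1))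
    (∀ i, 1 ≤ i →
      θ ^ q ^ (r - 1) * (x i) ^ q ^ r +
      (∑ j ∈ Finset.Icc 1 (r - 1), (a j) ^ q ^ (r - 1 - j) * (x i) ^ q ^ (r - j)) +
      x i - (x (i - 1)) ^ q ^ r = 0) ∧
    (θ ^ q ^ (r - 1) * (x 0) ^ q ^ r +
      (∑ j ∈ Finset.Icc 1 (r - 1), (a j) ^ q ^ (r - 1 - j) * (x 0) ^ q ^ (r - j)) +
      x 0 = 0) :=
  stmt12_general hq θ r hr a Y h0 hj
end

section
/- Let K be an algebraically closed field of characteristic p containing F_q. Suppose the sequences (x_i) and (y_i) in K satisfy first-order twisted recurrences a_1 x_{i+1}^q + a_0 x_{i+1} + b x_i = 0 and c_1 y_{i+1}^q + c_0 y_{i+1} + d y_i = 0 for all i ≥ 0, with a_1, c_1 ≠ 0. Then there exist P_2, P_1, P_0 ∈ K{τ}, not all zero, with deg_τ P_2 ≤ 3, deg_τ P_1 ≤ 2, deg_τ P_0 ≤ 1, such that for all i ≥ 0: P_2(x_{i+2}+y_{i+2}) + P_1(x_{i+1}+y_{i+1}) + P_0(x_i + y_i) = 0, where P(z) denotes the additive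 polynomial ∑ c_j z^{q^j} associated to P = ∑ c_j τ^j. -/
/-!
Write the recurrences as `L z_{i+1} + B z_i = 0` in the twisted polynomial ring `K{τ}`, with
`L = a₁τ + a₀` and `B = b`. For `U, V ∈ K{τ}` of degrees `≤ 2` and `≤ 1`, applying
`U(L z_{i+2} + B z_{i+1}) + V(L z_{i+1} + B z_i) = 0` gives the relation `(UL, UB + VL, VB)`,
of degrees `≤ (3, 2, 1)`. As `K{τ}` has no zero divisors, these relations form a
5-dimensional subspace of the 9-dimensional space of such triples. The subspaces for `x` and
for `y` therefore meet nontrivially, and a common relation annihilates `x + y` because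
`z ↦ P(z)` is additive for every `P ∈ K{τ}`.
-/

open Polynomial Module

section

variable {K M N : Type*} [DivisionRing K] [AddCommGroup M] [Module K M] [AddCommGroup N]
  [Module K N] (p : Submodule K M) (q : Submodule K N)

theorem Submodule.range_subtype_prodMap_subtype :
    (p.subtype.prodMap q.subtype).range = p.prod q := by
  rw [LinearMap.range_prodMap, p.range_subtype, q.range_subtype]

instance Submodule.finiteDimensional_prod [FiniteDimensional K p] [FiniteDimensional K q] :
    FiniteDimensional K (p.prod q) := by
  rw [← Submodule.range_subtype_prodMap_subtype]
  infer_instance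

theorem Submodule.finrank_prod [FiniteDimensional K p] [FiniteDimensional K q] :
    finrank K (p.prod q) = finrank K p + finrank K q := by
  rw [← Submodule.range_subtype_prodMap_subtype, LinearMap.finrank_range_of_inj,
    Module.finrank_prod]
  exact p.injective_subtype.prodMap q.injective_subtype

end

theorem Submodule.exists_mem_inf_ne_zero_of_finrank_lt {K V : Type*} [DivisionRing K]
    [AddCommGroup V] [Module K V] {s t T : Submodule K V} [FiniteDimensional K T]
    (hs : s ≤ T) (ht : t ≤ T) (h : finrank K T < finrank K s + finrank K t) :
    ∃ v ∈ s ⊓ t, v ≠ 0 := by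
  have := Submodule.finiteDimensional_of_le hs
  have := Submodule.finiteDimensional_of_le ht
  have hsup := Submodule.finrank_mono (sup_le hs ht)
  have hinf : 0 < finrank K ↥(s ⊓ t) := by
    have := Submodule.finrank_sup_add_finrank_inf_eq s t
    omega
  obtain ⟨⟨v, hv⟩, hv0⟩ := Module.finrank_pos_iff_exists_ne_zero.mp hinf
  exact ⟨v, hv, fun h => hv0 (by simp [h])⟩

namespace Polynomial

theorem finrank_degreeLT (R : Type*) [Semiring R] [StrongRankCondition R] (n : ℕ) :
    finrank R (degreeLT R n) = n := by
  rw [Module.finrank_eq_card_basis (degreeLT.basis R n), Fintype.card_fin]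

theorem natDegree_le_of_mem_degreeLT {R : Type*} [Semiring R] {P : R[X]} {m : ℕ}
    (h : P ∈ degreeLT R (m + 1)) : P.natDegree ≤ m := by
  rw [degreeLT_succ_eq_degreeLE, mem_degreeLE] at h
  exact natDegree_le_iff_degree_le.mpr h

section Twisted

variable {K : Type*} [Field K] (σ : K →+* K)

/-- An element `∑ cⱼ τʲ` of the twisted polynomial ring `K{τ}`, where `τ c = σ(c) τ`, is
encoded by the polynomial `∑ cⱼ Xʲ`; it acts on `K` as the additive map `z ↦ ∑ cⱼ σʲ(z)`. -/
noncomputable def twistEval (z : K) : K[X] →ₗ[K] K :=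
  lsum fun j => LinearMap.id.smulRight ((σ ^ j) z)

/-- Right multiplication by `Q` in `K{τ}`, using `τⁱ Q = Q^{σⁱ} τⁱ`. -/
noncomputable def twistMulRight (Q : K[X]) : K[X] →ₗ[K] K[X] :=
  lsum fun i => LinearMap.id.smulRight (X ^ i * Q.map (σ ^ i))

theorem twistEval_apply (z : K) (P : K[X]) :
    twistEval σ z P = P.sum fun j c => c * (σ ^ j) z := by
  simp only [twistEval, lsum_apply, LinearMap.smulRight_apply, LinearMap.id_apply, smul_eq_mul]

theorem twistEval_monomial (z c : K) (j : ℕ) :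
    twistEval σ z (monomial j c) = c * (σ ^ j) z := by
  rw [twistEval_apply, sum_monomial_index c _ (zero_mul _)]

theorem twistEval_C (z c : K) : twistEval σ z (C c) = c * z := by
  rw [← monomial_zero_left, twistEval_monomial, pow_zero]
  rfl

theorem twistEval_C_mul_X (z c : K) : twistEval σ z (C c * X) = c * σ z := by
  rw [C_mul_X_eq_monomial, twistEval_monomial, pow_one]

theorem twistEval_add (z w : K) (P : K[X]) :
    twistEval σ (z + w) P = twistEval σ z P + twistEval σ w P := by
  simp only [twistEval_apply, map_add, mul_add, sum_add]

theorem twistEval_zero (P : K[X]) : twistEval σ 0 P = 0 := by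
  simp [twistEval_apply, Polynomial.sum_def]

theorem twistEval_X_pow_mul_map (z : K) (i : ℕ) (Q : K[X]) :
    twistEval σ z (X ^ i * Q.map (σ ^ i)) = (σ ^ i) (twistEval σ z Q) := by
  induction Q using Polynomial.induction_on' with
  | add Q R hQ hR => simp only [Polynomial.map_add, mul_add, map_add, hQ, hR]
  | monomial j b =>
    rw [map_monomial, X_pow_mul_monomial, twistEval_monomial, twistEval_monomial, map_mul,
      add_comm, pow_add, RingHom.mul_def, RingHom.comp_apply]

theorem twistMulRight_apply (Q P : K[X]) :
    twistMulRight σ Q P = ∑ i ∈ P.support, P.coeff i • (X ^ i * Q.map (σ ^ i)) := by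
  simp only [twistMulRight, lsum_apply, LinearMap.smulRight_apply, LinearMap.id_apply, sum_def]

theorem twistMulRight_monomial (Q : K[X]) (i : ℕ) (a : K) :
    twistMulRight σ Q (monomial i a) = a • (X ^ i * Q.map (σ ^ i)) := by
  rw [twistMulRight, lsum_apply, sum_monomial_index _ _ (by simp)]
  rfl

theorem twistEval_twistMulRight (z : K) (Q P : K[X]) :
    twistEval σ z (twistMulRight σ Q P) = twistEval σ (twistEval σ z Q) P := by
  induction P using Polynomial.induction_on' with
  | add P R hP hR => simp only [map_add, hP, hR]
  | monomial i a =>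
    rw [twistMulRight_monomial, map_smul, twistEval_X_pow_mul_map, twistEval_monomial,
      smul_eq_mul]

theorem natDegree_twistMulRight_le (Q P : K[X]) :
    (twistMulRight σ Q P).natDegree ≤ P.natDegree + Q.natDegree := by
  rw [twistMulRight_apply]
  refine natDegree_sum_le_of_forall_le _ _ fun i hi => (natDegree_smul_le _ _).trans ?_
  refine natDegree_mul_le.trans (add_le_add ((natDegree_X_pow_le i).trans ?_) natDegree_map_le)
  exact le_natDegree_of_mem_supp i hi

theorem coeff_twistMulRight_natDegree_add (Q P : K[X]) :
    (twistMulRight σ Q P).coeff (P.natDegree + Q.natDegree) =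
      P.leadingCoeff * (σ ^ P.natDegree) Q.leadingCoeff := by
  rw [twistMulRight_apply, finsetSum_coeff, Finset.sum_eq_single P.natDegree]
  · rw [coeff_smul, coeff_X_pow_mul', if_pos le_self_add, Nat.add_sub_cancel_left, coeff_map,
      smul_eq_mul]
    rfl
  · intro i hi hne
    have hlt : i < P.natDegree := lt_of_le_of_ne (le_natDegree_of_mem_supp i hi) hne
    rw [coeff_smul, coeff_X_pow_mul', if_pos (by omega), coeff_map,
      coeff_eq_zero_of_natDegree_lt (show Q.natDegree < _ by omega), map_zero, smul_zero]
  · intro h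
    rw [notMem_support_iff.mp h, zero_smul, coeff_zero]

theorem twistMulRight_injective {Q : K[X]} (hQ : Q ≠ 0) :
    Function.Injective (twistMulRight σ Q) := by
  refine (injective_iff_map_eq_zero _).mpr fun P hP => ?_
  by_contra hP0
  have hcoeff := coeff_twistMulRight_natDegree_add σ Q P
  rw [hP, coeff_zero, eq_comm] at hcoeff
  exact mul_ne_zero (leadingCoeff_ne_zero.mpr hP0)
    ((_root_.map_ne_zero _).mpr (leadingCoeff_ne_zero.mpr hQ)) hcoeff

theorem twistMulRight_mem_degreeLT {Q P : K[X]} {m k : ℕ} (hQ : Q.natDegree ≤ k)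
    (hP : P ∈ degreeLT K m) : twistMulRight σ Q P ∈ degreeLT K (m + k) := by
  rcases eq_or_ne P 0 with rfl | hP0
  · rw [map_zero]
    exact zero_mem _
  rw [mem_degreeLT, ← natDegree_lt_iff_degree_lt hP0] at hP
  rw [mem_degreeLT]
  refine degree_le_natDegree.trans_lt ?_
  exact_mod_cast (natDegree_twistMulRight_le σ Q P).trans_lt (by omega)

/-- The coefficients of `U(L z₂ + B z₁) + V(L z₁ + B z₀)` with respect to `z₂, z₁, z₀`. -/
noncomputable def twistRelationMap (L B : K[X]) :
    K[X] × K[X] →ₗ[K] K[X] × K[X] × K[X] :=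
  (twistMulRight σ L ∘ₗ .fst K K[X] K[X]).prod
    ((twistMulRight σ B ∘ₗ .fst K K[X] K[X] + twistMulRight σ L ∘ₗ .snd K K[X] K[X]).prod
      (twistMulRight σ B ∘ₗ .snd K K[X] K[X]))

theorem twistRelationMap_apply (L B U V : K[X]) :
    twistRelationMap σ L B (U, V) =
      (twistMulRight σ L U, twistMulRight σ B U + twistMulRight σ L V, twistMulRight σ B V) :=
  rfl

theorem twistEval_twistRelationMap (L B U V : K[X]) (z₂ z₁ z₀ : K) :
    twistEval σ z₂ (twistRelationMap σ L B (U, V)).1 +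
        twistEval σ z₁ (twistRelationMap σ L B (U, V)).2.1 +
        twistEval σ z₀ (twistRelationMap σ L B (U, V)).2.2 =
      twistEval σ (twistEval σ z₂ L + twistEval σ z₁ B) U +
        twistEval σ (twistEval σ z₁ L + twistEval σ z₀ B) V := by
  simp only [twistRelationMap_apply, map_add, twistEval_twistMulRight, twistEval_add]
  ring

theorem twistRelationMap_injective {L : K[X]} (hL : L ≠ 0) (B : K[X]) :
    Function.Injective (twistRelationMap σ L B) := by
  refine (injective_iff_map_eq_zero _).mpr fun ⟨U, V⟩ h => ?_
  obtain ⟨hU, hrest⟩ := Prod.mk_eq_zero.mp ((twistRelationMap_apply σ L B U V).symm.trans h)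
  have hV := (Prod.mk_eq_zero.mp hrest).1
  have hU0 : U = 0 := twistMulRight_injective σ hL (hU.trans (map_zero _).symm)
  rw [hU0, map_zero, zero_add] at hV
  rw [hU0, twistMulRight_injective σ hL (hV.trans (map_zero _).symm), Prod.mk_zero_zero]

noncomputable def twistRelations (L B : K[X]) : Submodule K (K[X] × K[X] × K[X]) :=
  (twistRelationMap σ L B ∘ₗ (degreeLT K 3).subtype.prodMap (degreeLT K 2).subtype).range

theorem finrank_twistRelations {L : K[X]} (hL : L ≠ 0) (B : K[X]) :
    finrank K (twistRelations σ L B) = 5 := by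
  rw [twistRelations, LinearMap.finrank_range_of_inj, Module.finrank_prod, finrank_degreeLT,
    finrank_degreeLT]
  exact (twistRelationMap_injective σ hL B).comp
    ((degreeLT K 3).injective_subtype.prodMap (degreeLT K 2).injective_subtype)

theorem twistRelations_le {L B : K[X]} (hL : L.natDegree ≤ 1) (hB : B.natDegree = 0) :
    twistRelations σ L B ≤ (degreeLT K 4).prod ((degreeLT K 3).prod (degreeLT K 2)) := by
  intro R hR
  rw [twistRelations, LinearMap.mem_range] at hR
  obtain ⟨⟨U, V⟩, rfl⟩ := hR
  rw [LinearMap.comp_apply, LinearMap.prodMap_apply, Submodule.subtype_apply,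
    Submodule.subtype_apply, twistRelationMap_apply]
  exact ⟨twistMulRight_mem_degreeLT (m := 3) (k := 1) σ hL U.2,
    add_mem (twistMulRight_mem_degreeLT (m := 3) (k := 0) σ hB.le U.2)
      (twistMulRight_mem_degreeLT (m := 2) (k := 1) σ hL V.2),
    twistMulRight_mem_degreeLT (m := 2) (k := 0) σ hB.le V.2⟩

theorem twistEval_twistRelations_eq_zero {L B : K[X]} {R : K[X] × K[X] × K[X]}
    (hR : R ∈ twistRelations σ L B) {z : ℕ → K}
    (hz : ∀ i, twistEval σ (z (i + 1)) L + twistEval σ (z i) B = 0) (i : ℕ) :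
    twistEval σ (z (i + 2)) R.1 + twistEval σ (z (i + 1)) R.2.1 +
      twistEval σ (z i) R.2.2 = 0 := by
  rw [twistRelations, LinearMap.mem_range] at hR
  obtain ⟨⟨U, V⟩, rfl⟩ := hR
  rw [LinearMap.comp_apply, LinearMap.prodMap_apply, twistEval_twistRelationMap, hz, hz,
    twistEval_zero, twistEval_zero, add_zero]

end Twisted

theorem iterateFrobenius_pow_apply {R : Type*} [CommSemiring R] (p n j : ℕ) [ExpChar R p]
    (z : R) : (iterateFrobenius R p n ^ j) z = z ^ (p ^ n) ^ j := by
  rw [RingHom.coe_pow]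
  exact congr_fun (pow_iterate (p ^ n) j) z

theorem twistEval_iterateFrobenius {K : Type*} [Field K] {p : ℕ} [ExpChar K p] (n : ℕ) (z : K)
    {P : K[X]} {m : ℕ} (hP : P.natDegree ≤ m) :
    twistEval (iterateFrobenius K p n) z P =
      ∑ j ∈ Finset.range (m + 1), P.coeff j * z ^ (p ^ n) ^ j := by
  rw [twistEval_apply, sum_over_range' _ (fun j => zero_mul ((iterateFrobenius K p n ^ j) z))
    (m + 1) (Nat.lt_succ_of_le hP)]
  simp only [iterateFrobenius_pow_apply]

end Polynomial

theorem stmt17_general {p n q : ℕ} [Fact p.Prime] (hq : q = p ^ n)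
    {K : Type*} [Field K] [CharP K p]
    (a0 a1 b c0 c1 d : K) (ha1 : a1 ≠ 0) (hc1 : c1 ≠ 0)
    (x y : ℕ → K)
    (hx : ∀ i, a1 * (x (i + 1)) ^ q + a0 * x (i + 1) + b * x i = 0)
    (hy : ∀ i, c1 * (y (i + 1)) ^ q + c0 * y (i + 1) + d * y i = 0) :
    ∃ P2 P1 P0 : Polynomial K,
      ¬ (P2 = 0 ∧ P1 = 0 ∧ P0 = 0) ∧
      P2.natDegree ≤ 3 ∧ P1.natDegree ≤ 2 ∧ P0.natDegree ≤ 1 ∧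
      ∀ i,
        (∑ j ∈ Finset.range 4, P2.coeff j * (x (i + 2) + y (i + 2)) ^ q ^ j) +
        (∑ j ∈ Finset.range 3, P1.coeff j * (x (i + 1) + y (i + 1)) ^ q ^ j) +
        (∑ j ∈ Finset.range 2, P0.coeff j * (x i + y i) ^ q ^ j) = 0 := by
  subst hq
  set σ := iterateFrobenius K p n
  have hrec : ∀ (e0 e1 f : K) (z : ℕ → K),
      (∀ i, e1 * z (i + 1) ^ p ^ n + e0 * z (i + 1) + f * z i = 0) →
      ∀ i, twistEval σ (z (i + 1)) (C e1 * X + C e0) + twistEval σ (z i) (C f) = 0 := by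
    intro e0 e1 f z hz i
    rw [map_add, twistEval_C_mul_X, twistEval_C, twistEval_C, iterateFrobenius_def]
    linear_combination hz i
  have hL : ∀ e0 e1 : K, e1 ≠ 0 → C e1 * X + C e0 ≠ 0 := fun e0 e1 he1 =>
    ne_zero_of_coe_le_degree (degree_linear he1).ge
  obtain ⟨⟨P2, P1, P0⟩, ⟨hRx, hRy⟩, hR0⟩ :=
    Submodule.exists_mem_inf_ne_zero_of_finrank_lt
      (twistRelations_le σ natDegree_linear_le (natDegree_C b))
      (twistRelations_le σ natDegree_linear_le (natDegree_C d))
      (by rw [finrank_twistRelations σ (hL a0 a1 ha1), finrank_twistRelations σ (hL c0 c1 hc1),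
        Submodule.finrank_prod, Submodule.finrank_prod, finrank_degreeLT, finrank_degreeLT,
        finrank_degreeLT]; norm_num)
  obtain ⟨h2, h1, h0⟩ := twistRelations_le σ natDegree_linear_le (natDegree_C b) hRx
  have hd2 := natDegree_le_of_mem_degreeLT h2
  have hd1 := natDegree_le_of_mem_degreeLT h1
  have hd0 := natDegree_le_of_mem_degreeLT h0
  refine ⟨P2, P1, P0, fun h => hR0 (by simp [h]), hd2, hd1, hd0, fun i => ?_⟩
  rw [← twistEval_iterateFrobenius n _ hd2, ← twistEval_iterateFrobenius n _ hd1,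
    ← twistEval_iterateFrobenius n _ hd0]
  simp only [twistEval_add]
  linear_combination twistEval_twistRelations_eq_zero σ hRx (hrec a0 a1 b x hx) i +
    twistEval_twistRelations_eq_zero σ hRy (hrec c0 c1 d y hy) i

/-- Closure of holonomic sequences under memberwise sum, in the simplest case:
if `(x_i)` and `(y_i)` satisfy first-order twisted recurrences
`a₁ x_{i+1}^q + a₀ x_{i+1} + b x_i = 0` and `c₁ y_{i+1}^q + c₀ y_{i+1} + d y_i = 0`
with `a₁, c₁ ≠ 0`, then there are `P₂, P₁, P₀ ∈ K{τ}` (represented as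
polynomials whose `j`-th coefficient is the coefficient of `τ^j`), not all
zero, with `deg_τ P₂ ≤ 3`, `deg_τ P₁ ≤ 2`, `deg_τ P₀ ≤ 1`, such that the
associated additive polynomials satisfy
`P₂(x_{i+2}+y_{i+2}) + P₁(x_{i+1}+y_{i+1}) + P₀(x_i+y_i) = 0` for all `i`. -/
theorem stmt17 {p n q : ℕ} [Fact p.Prime] (hn : 0 < n) (hq : q = p ^ n)
    {K : Type*} [Field K] [CharP K p] [IsAlgClosed K]
    (a0 a1 b c0 c1 d : K) (ha1 : a1 ≠ 0) (hc1 : c1 ≠ 0)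
    (x y : ℕ → K)
    (hx : ∀ i, a1 * (x (i + 1)) ^ q + a0 * x (i + 1) + b * x i = 0)
    (hy : ∀ i, c1 * (y (i + 1)) ^ q + c0 * y (i + 1) + d * y i = 0) :
    ∃ P2 P1 P0 : Polynomial K,
      ¬ (P2 = 0 ∧ P1 = 0 ∧ P0 = 0) ∧
      P2.natDegree ≤ 3 ∧ P1.natDegree ≤ 2 ∧ P0.natDegree ≤ 1 ∧
      ∀ i,
        (∑ j ∈ Finset.range 4, P2.coeff j * (x (i + 2) + y (i + 2)) ^ q ^ j) +
        (∑ j ∈ Finset.range 3, P1.coeff j * (x (i + 1) + y (i + 1)) ^ q ^ j) +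
        (∑ j ∈ Finset.range 2, P0.coeff j * (x i + y i) ^ q ^ j) = 0 :=
  stmt17_general hq a0 a1 b c0 c1 d ha1 hc1 x y hx hy
end
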